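/- arXiv:2112.02854 — 4 statements merged into one kernel-verified Lean document; each statement's English description precedes it below -/
import Mathlib

section
/- Let 𝐯 be a recurrent aperiodic balanced sequence over a finite alphabet and let a be a letter occurring in 𝐯. Then there exists a positive integer k such that the set of all distances j − i, taken over all pairs i < j of consecutive occurrences of a in 𝐯, is exactly the two-element set {k, k+1}. -/
open Filter
open scoped ENNReal

namespace BalancedCE

variable {α : Type*} {β : Type*}

/-- The factor of `v` of length `n` starting at position `i`. -/
def factorAt (v : ℕ → α) (i n : ℕ) : List α := (List.range n).map fun k => v (i + k)

/-- `u` is a factor of the sequence `v`. -/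
def IsFactor (v : ℕ → α) (u : List α) : Prop := ∃ i, factorAt v i u.length = u

/-- The word `w` occurs in the sequence `v` at position `i`. -/
def OccursAt (v : ℕ → α) (w : List α) (i : ℕ) : Prop := factorAt v i w.length = w

/-- A sequence is balanced if counts of each letter in equal-length factors differ by at most 1. -/
def Balanced [DecidableEq α] (v : ℕ → α) : Prop :=
  ∀ (a : α) (u w : List α), IsFactor v u → IsFactor v w → u.length = w.length →
    |(u.count a : ℤ) - (w.count a : ℤ)| ≤ 1

def EventuallyPeriodic (v : ℕ → α) : Prop :=
  ∃ p, 0 < p ∧ ∃ N, ∀ n, N ≤ n → v (n + p) = v n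

def Recurrent (v : ℕ → α) : Prop :=
  ∀ u : List α, IsFactor v u → ∀ N : ℕ, ∃ i, N ≤ i ∧ OccursAt v u i

/-- `i < j` are consecutive occurrences of the letter `a` in `v`. -/
def ConsecOcc (v : ℕ → α) (a : α) (i j : ℕ) : Prop :=
  i < j ∧ v i = a ∧ v j = a ∧ ∀ k, i < k → k < j → v k ≠ a

/-- `p` is a period of the finite word `z` (i.e. `z` is a prefix of `u^ω` with `|u| = p`). -/
def IsPeriod (z : List α) (p : ℕ) : Prop :=
  0 < p ∧ ∀ i, i + p < z.length → z[i]? = z[i + p]?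

/-- The minimal period of a finite word. -/
noncomputable def minPeriod (z : List α) : ℕ := sInf {p | IsPeriod z p}

/-- The exponent of a finite word: its length divided by its minimal period. -/
noncomputable def expE (z : List α) : ℝ≥0∞ := (z.length : ℝ≥0∞) / (minPeriod z : ℝ≥0∞)

/-- The critical exponent of a sequence: the supremum of exponents of nonempty factors. -/
noncomputable def criticalExponent (v : ℕ → α) : ℝ≥0∞ :=
  ⨆ (z : List α) (_ : IsFactor v z ∧ z ≠ []), expE z

/-- A Pansiot sequence over a `d`-letter alphabet. -/
def Pansiot (d : ℕ) (v : ℕ → α) : Prop :=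
  (∀ i : ℕ, (factorAt v i (d - 1)).Nodup) ∧
  ∀ (a : α) (i j : ℕ), ConsecOcc v a i j → v (i + 1) ≠ v (j + 1)

/-- The letter `a` has frequency `ρ` in the sequence `v`. -/
def HasFreq [DecidableEq α] (v : ℕ → α) (a : α) (ρ : ℝ) : Prop :=
  Tendsto (fun n => ((factorAt v 0 n).count a : ℝ) / n) atTop (nhds ρ)

/-- Factor complexity of a sequence. -/
noncomputable def complexity (v : ℕ → α) (n : ℕ) : ℕ :=
  Set.ncard {u : List α | IsFactor v u ∧ u.length = n}

/-- Sturmian sequences: aperiodic binary sequences of factor complexity `n + 1`.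
Convention: the letter `a` is `false`, the letter `b` is `true`. -/
def Sturmian (u : ℕ → Bool) : Prop :=
  ¬ EventuallyPeriodic u ∧ ∀ n, complexity u n = n + 1

/-- Prepending a letter to a sequence. -/
def consSeq (c : α) (v : ℕ → α) : ℕ → α := fun n =>
  match n with
  | 0 => c
  | Nat.succ m => v m

/-- A standard sequence: a Sturmian sequence `u` such that `a·u` and `b·u` are Sturmian. -/
def IsStandard (u : ℕ → Bool) : Prop :=
  Sturmian u ∧ Sturmian (consSeq false u) ∧ Sturmian (consSeq true u)

/-- The slope of a binary sequence, with the convention `ρ_b > ρ_a` (`a = false`, `b = true`). -/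
def HasSlope (u : ℕ → Bool) (θ : ℝ) : Prop :=
  ∃ ρa ρb : ℝ, HasFreq u false ρa ∧ HasFreq u true ρb ∧ ρa < ρb ∧ θ = ρa / ρb

/-- `θ` has the (infinite) continued fraction expansion `[0; a 1, a 2, a 3, …]`:
there are complete quotients' fractional parts `t n ∈ (0,1)` with `t 0 = θ` and
`1 / t n = a (n+1) + t (n+1)` for all `n`. (The value `a 0` is irrelevant.) -/
def HasCF (θ : ℝ) (a : ℕ → ℕ) : Prop :=
  ∃ t : ℕ → ℝ, t 0 = θ ∧ ∀ n, 0 < t n ∧ t n < 1 ∧ 1 / t n = (a (n + 1) : ℝ) + t (n + 1)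

/-- Number of positions `< n` where `u` takes the value `c`. -/
def countBefore (u : ℕ → Bool) (c : Bool) (n : ℕ) : ℕ :=
  ((List.range n).filter fun i => u i = c).length

/-- The colouring of a binary sequence `u` by `y` (on the `a = false` positions)
and `y'` (on the `b = true` positions). -/
def colour (u : ℕ → Bool) (y : ℕ → α) (y' : ℕ → β) : ℕ → α ⊕ β := fun n =>
  if u n = false then Sum.inl (y (countBefore u false n))
  else Sum.inr (y' (countBefore u true n))

/-- A constant gap sequence: periodic, and consecutive occurrences of each occurring
letter are at a constant distance. -/
def ConstantGap (y : ℕ → α) : Prop :=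
  (∃ p, 0 < p ∧ ∀ n, y (n + p) = y n) ∧
  ∀ c : α, (∃ i, y i = c) → ∃ g, 0 < g ∧ ∀ i j, ConsecOcc y c i j → j - i = g

/-- The discolouration (projection) map: letters of the first alphabet go to `a = false`,
letters of the second alphabet go to `b = true`. -/
def proj : α ⊕ β → Bool := Sum.elim (fun _ => false) (fun _ => true)

/-- `v` is a return word to `w` in the sequence `z`. -/
def IsReturnWord (z : ℕ → α) (w v : List α) : Prop :=
  ∃ i j : ℕ, i < j ∧ OccursAt z w i ∧ OccursAt z w j ∧
    (∀ k, i < k → k < j → ¬ OccursAt z w k) ∧ v = factorAt z i (j - i)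

def RightSpecial (z : ℕ → α) (w : List α) : Prop :=
  ∃ a b : α, a ≠ b ∧ IsFactor z (w ++ [a]) ∧ IsFactor z (w ++ [b])

def LeftSpecial (z : ℕ → α) (w : List α) : Prop :=
  ∃ a b : α, a ≠ b ∧ IsFactor z (a :: w) ∧ IsFactor z (b :: w)

def Bispecial (z : ℕ → α) (w : List α) : Prop := LeftSpecial z w ∧ RightSpecial z w

/-- `o` enumerates, in increasing order, all occurrences of `w` in `z`. -/
def IsOccEnum (z : ℕ → α) (w : List α) (o : ℕ → ℕ) : Prop :=
  StrictMono o ∧ (∀ n, OccursAt z w (o n)) ∧ ∀ i, OccursAt z w i → ∃ n, o n = i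

/-- The derived sequence of `z` with respect to the occurrence enumeration `o` of a factor:
its `n`-th letter is the return word between the `n`-th and `(n+1)`-st occurrences. -/
def derivedSeq (z : ℕ → α) (o : ℕ → ℕ) : ℕ → List α :=
  fun n => factorAt z (o n) (o (n + 1) - o n)

/-- The slope of a sequence over a two-letter alphabet:
the ratio of the smaller letter frequency to the larger one. -/
def HasSlope2 {γ : Type*} [DecidableEq γ] (z : ℕ → γ) (θ : ℝ) : Prop :=
  ∃ (c c' : γ) (ρ ρ' : ℝ), c ≠ c' ∧ (∀ n, z n = c ∨ z n = c') ∧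
    HasFreq z c ρ ∧ HasFreq z c' ρ' ∧ ρ < ρ' ∧ θ = ρ / ρ'

/-- The purely cyclic constant gap sequence `(0 1 ⋯ (δ-1))^ω` over `ZMod δ`. -/
def cyc (δ : ℕ) : ℕ → ZMod δ := fun n => (n : ZMod δ)

/-- The colouring `colour(u, (1 2 ⋯ δ)^ω, (1' 2' ⋯ δ')^ω)` over `2δ` letters. -/
def colourCyc (δ : ℕ) (u : ℕ → Bool) : ℕ → ZMod δ ⊕ ZMod δ := colour u (cyc δ) (cyc δ)

/-!
Balance applied to a window inside a gap of length `g` (containing no `a`) and to a window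
spanning a gap of length `h` (containing two `a`s) gives `g ≤ h + 1`, so all gaps lie in
`{k, k + 1}` with `k` the smallest gap.

If every gap were `k`, the letter `a` would fill a whole progression `i₀ + kℕ`. Let `c ≠ a` have
frequency `ρ`. By balance the discrepancy `|v₀ ⋯ v_{p-1}|_c - pρ` oscillates by at most `1`.
If `ρ = z / q`, its increments over steps of length `q` are integers of one sign, hence eventually
zero, and the occurrences of `c` are eventually periodic. If `ρ` is irrational, `c` occurs
wherever the discrepancy is less than `ρ` above its infimum; as the discrepancy is `-pρ` modulo
`1`, Dirichlet's approximation theorem finds such a position on `i₀ + kℕ`, which is absurd.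
So every letter other than `a`, and therefore `v`, is eventually periodic.
-/

theorem length_factorAt (v : ℕ → α) (p n : ℕ) : (factorAt v p n).length = n := by
  simp [factorAt]

theorem factorAt_add (v : ℕ → α) (p m n : ℕ) :
    factorAt v p (m + n) = factorAt v p m ++ factorAt v (p + m) n := by
  simp [factorAt, List.range_add, Nat.add_assoc]

theorem Recurrent.exists_consecOcc {v : ℕ → α} (hrec : Recurrent v) {a : α} {i : ℕ}
    (hi : v i = a) : ∃ j, ConsecOcc v a i j := by
  classical
  have hfac : IsFactor v [a] := ⟨i, by simp [factorAt, hi]⟩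
  obtain ⟨j, hij, hj⟩ := hrec [a] hfac (i + 1)
  have hex : ∃ j, i < j ∧ v j = a := ⟨j, hij, by simpa [OccursAt, factorAt] using hj⟩
  refine ⟨Nat.find hex, (Nat.find_spec hex).1, hi, (Nat.find_spec hex).2, fun k hik hkj hk => ?_⟩
  exact Nat.find_min hex hkj ⟨hik, hk⟩

theorem Recurrent.apply_add_mul_eq_of_consecOcc_sub_eq {v : ℕ → α} (hrec : Recurrent v) {a : α}
    {i k : ℕ} (hi : v i = a) (hgap : ∀ i j, ConsecOcc v a i j → j - i = k) (m : ℕ) :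
    v (i + m * k) = a := by
  induction m with
  | zero => simpa using hi
  | succ m ih =>
    obtain ⟨j, hj⟩ := hrec.exists_consecOcc ih
    have hjk := hgap _ _ hj
    have hj' : i + (m + 1) * k = j := by have := hj.1; rw [Nat.succ_mul]; omega
    exact hj' ▸ hj.2.2.1

theorem eventuallyPeriodic_pi {ι : Type*} [Finite ι] {f : ℕ → ι → β}
    (h : ∀ i, EventuallyPeriodic fun n => f n i) : EventuallyPeriodic f := by
  have := Fintype.ofFinite ι
  choose L hL N hN using h
  refine ⟨∏ i, L i, Finset.prod_pos fun i _ => hL i, ∑ i, N i, fun n hn => funext fun i => ?_⟩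
  obtain ⟨m, hm⟩ : L i ∣ ∏ i, L i := Finset.dvd_prod_of_mem _ (Finset.mem_univ i)
  have hNi : N i ≤ n :=
    (Finset.single_le_sum (fun _ _ => Nat.zero_le _) (Finset.mem_univ i)).trans hn
  rw [hm]
  clear hm
  induction m with
  | zero => simp
  | succ m ih => rw [Nat.mul_succ, ← add_assoc, ← ih]; exact hN i _ (by omega)

theorem eventuallyPeriodic_of_forall_ne [Finite α] {v : ℕ → α} (a : α)
    (h : ∀ c, c ≠ a → EventuallyPeriodic fun n => v n = c) : EventuallyPeriodic v := by
  obtain ⟨p, hp, N, hN⟩ :=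
    eventuallyPeriodic_pi (f := fun n (c : {c // c ≠ a}) => v n = c) fun c => h c c.2
  refine ⟨p, hp, N, fun n hn => ?_⟩
  have hc (c : {c // c ≠ a}) : v (n + p) = c ↔ v n = c := (congrFun (hN n hn) c).to_iff
  by_cases ha : v n = a
  · by_contra hne
    exact hne ((hc ⟨v (n + p), fun h => hne (h.trans ha.symm)⟩).mp rfl).symm
  · exact (hc ⟨v n, ha⟩).mpr rfl

theorem eventually_eq_zero_of_abs_sub_le_one {f : ℕ → ℝ} (hf : ∀ x y, |f x - f y| ≤ 1)
    {q : ℕ} (hq : 0 < q) {g : ℕ → ℤ} (hfg : ∀ p, f (p + q) - f p = g p) (hg : ∀ p, 0 ≤ g p) :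
    ∀ᶠ p in atTop, g p = 0 := by
  have hmono (p t : ℕ) : f p ≤ f (p + t * q) := by
    induction t with
    | zero => simp
    | succ t ih =>
      have : (0 : ℝ) ≤ g (p + t * q) := by exact_mod_cast hg _
      rw [Nat.succ_mul, ← add_assoc]
      linarith [hfg (p + t * q)]
  -- two jumps in the same residue class mod q would add up to an oscillation of 2
  have hinj : Set.InjOn (· % q) {p | g p ≠ 0} := by
    have key (p₁ p₂ : ℕ) (hp₁ : g p₁ ≠ 0) (hp₂ : g p₂ ≠ 0) (hlt : p₁ < p₂)
        (hmod : p₁ % q = p₂ % q) : False := by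
      obtain ⟨t, ht⟩ := (Nat.modEq_iff_dvd' hlt.le).mp hmod
      have hp₂' : p₂ = p₁ + q + (t - 1) * q := by
        rcases t with _ | t
        · omega
        · rw [Nat.mul_succ] at ht
          rw [Nat.add_sub_cancel, mul_comm t q]
          omega
      have h₁ : (1 : ℝ) ≤ g p₁ := by exact_mod_cast (hg p₁).lt_of_ne' hp₁
      have h₂ : (1 : ℝ) ≤ g p₂ := by exact_mod_cast (hg p₂).lt_of_ne' hp₂
      have hmid := hmono (p₁ + q) (t - 1)
      rw [← hp₂'] at hmid
      linarith [hfg p₁, hfg p₂, (abs_le.mp (hf (p₂ + q) p₁)).2]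
    intro p₁ hp₁ p₂ hp₂ hmod
    rcases lt_trichotomy p₁ p₂ with hlt | heq | hgt
    · exact (key p₁ p₂ hp₁ hp₂ hlt hmod).elim
    · exact heq
    · exact (key p₂ p₁ hp₂ hp₁ hgt hmod.symm).elim
  have hfin : {p | g p ≠ 0}.Finite := by
    refine Set.Finite.of_finite_image ((Set.finite_Iio q).subset ?_) hinj
    rintro _ ⟨p, -, rfl⟩
    exact Nat.mod_lt p hq
  rw [← Nat.cofinite_eq_atTop]
  simpa using hfin.eventually_cofinite_notMem

theorem exists_nat_int_add_mul_mem_Ioo_of_abs_lt {d ε : ℝ} (hd : d ≠ 0) (hdε : |d| < ε)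
    (y a : ℝ) : ∃ (t : ℕ) (N : ℤ), y + t * d + N ∈ Set.Ioo a (a + ε) := by
  wlog hpos : 0 < d generalizing d y a
  · obtain ⟨t, N, h₁, h₂⟩ :=
      this (neg_ne_zero.mpr hd) (by rwa [abs_neg]) (-y) (-a - ε)
        (neg_pos.mpr ((not_lt.mp hpos).lt_of_ne hd))
    exact ⟨t, -N, by push_cast; linarith, by push_cast; linarith⟩
  -- start just below `a` and walk up in steps of `d < ε`
  set s := a - y - ⌊a - y⌋
  have hs : 0 ≤ s := sub_nonneg.mpr (Int.floor_le _)
  have hlow : s / d < ⌊s / d⌋₊ + 1 := Nat.lt_floor_add_one _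
  have hhigh : (⌊s / d⌋₊ : ℝ) ≤ s / d := Nat.floor_le (by positivity)
  rw [div_lt_iff₀ hpos] at hlow
  rw [le_div_iff₀ hpos] at hhigh
  rw [abs_of_pos hpos] at hdε
  refine ⟨⌊s / d⌋₊ + 1, ⌊a - y⌋, ?_, ?_⟩ <;> push_cast <;> nlinarith

theorem exists_nat_int_add_mul_mem_Ioo {θ : ℝ} (hθ : Irrational θ) (x a : ℝ) {ε : ℝ}
    (hε : 0 < ε) : ∃ (m : ℕ) (N : ℤ), x + m * θ + N ∈ Set.Ioo a (a + ε) := by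
  obtain ⟨n, hn⟩ := exists_nat_one_div_lt hε
  obtain ⟨k, hk, -, hkθ⟩ := Real.exists_nat_abs_mul_sub_round_le θ n.succ_pos
  have hd : k * θ - round (k * θ) ≠ 0 :=
    sub_ne_zero.mpr ((hθ.natCast_mul hk.ne').ne_int _)
  have hdε : |k * θ - round (k * θ)| < ε := hkθ.trans_lt <| lt_of_le_of_lt
    (one_div_le_one_div_of_le (by positivity) (by push_cast; linarith)) hn
  obtain ⟨t, N, h⟩ := exists_nat_int_add_mul_mem_Ioo_of_abs_lt hd hdε x a
  refine ⟨t * k, N - t * round (k * θ), ?_⟩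
  convert h using 1
  push_cast
  ring

section Balanced

variable [DecidableEq α]

def windowCount (v : ℕ → α) (c : α) (p n : ℕ) : ℕ := (factorAt v p n).count c

theorem windowCount_add (v : ℕ → α) (c : α) (p m n : ℕ) :
    windowCount v c p (m + n) = windowCount v c p m + windowCount v c (p + m) n := by
  simp [windowCount, factorAt_add]

theorem windowCount_one (v : ℕ → α) (c : α) (p : ℕ) :
    windowCount v c p 1 = if v p = c then 1 else 0 := by
  simp [windowCount, factorAt, List.count_singleton]

theorem windowCount_le (v : ℕ → α) (c : α) (p n : ℕ) : windowCount v c p n ≤ n :=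
  List.count_le_length.trans (length_factorAt v p n).le

theorem windowCount_mul (v : ℕ → α) (c : α) (p m n : ℕ) :
    windowCount v c p (m * n) = ∑ i ∈ Finset.range m, windowCount v c (p + i * n) n := by
  induction m with
  | zero => simp [windowCount, factorAt]
  | succ m ih => rw [Nat.succ_mul, windowCount_add, ih, Finset.sum_range_succ]

variable {v : ℕ → α}

theorem Balanced.windowCount_le_add_one (hbal : Balanced v) (c : α) (p q n : ℕ) :
    windowCount v c p n ≤ windowCount v c q n + 1 := by
  have h := hbal c _ _ ⟨p, congrArg _ (length_factorAt v p n)⟩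
    ⟨q, congrArg _ (length_factorAt v q n)⟩ (by simp only [length_factorAt])
  have := (abs_le.mp h).2
  simp only [windowCount]
  omega

theorem Balanced.sub_le_sub_add_one_of_consecOcc (hbal : Balanced v) {a : α} {i j i' j' : ℕ}
    (h : ConsecOcc v a i j) (h' : ConsecOcc v a i' j') : j - i ≤ j' - i' + 1 := by
  obtain ⟨hij, -, -, hgap⟩ := h
  obtain ⟨hij', hi', hj', -⟩ := h'
  by_contra! hlt
  set g := j' - i'
  have hzero : windowCount v a (i + 1) (g + 1) = 0 := by
    simp only [windowCount, List.count_eq_zero, factorAt, List.mem_map, List.mem_range, not_exists,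
      not_and]
    exact fun t ht => hgap _ (by omega) (by omega)
  have htwo : 2 ≤ windowCount v a i' (g + 1) := by
    rw [show g + 1 = 1 + (g - 1) + 1 by omega, windowCount_add, windowCount_add, windowCount_one,
      windowCount_one, show i' + (1 + (g - 1)) = j' by omega, if_pos hi', if_pos hj']
    omega
  have := hbal.windowCount_le_add_one a i' (i + 1) (g + 1)
  omega

noncomputable def minCount (v : ℕ → α) (c : α) (n : ℕ) : ℕ := ⨅ p, windowCount v c p n

theorem minCount_le (v : ℕ → α) (c : α) (p n : ℕ) : minCount v c n ≤ windowCount v c p n :=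
  ciInf_le (OrderBot.bddBelow _) p

theorem exists_windowCount_eq_minCount (v : ℕ → α) (c : α) (n : ℕ) :
    ∃ p, windowCount v c p n = minCount v c n :=
  Nat.sInf_mem (Set.range_nonempty _)

theorem Balanced.windowCount_le_minCount_add_one (hbal : Balanced v) (c : α) (p n : ℕ) :
    windowCount v c p n ≤ minCount v c n + 1 := by
  obtain ⟨q, hq⟩ := exists_windowCount_eq_minCount v c n
  exact hq ▸ hbal.windowCount_le_add_one c p q n

theorem Balanced.mul_minCount_le (hbal : Balanced v) (c : α) (m n : ℕ) :
    m * minCount v c n ≤ n * (minCount v c m + 1) :=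
  calc m * minCount v c n
      = ∑ _i ∈ Finset.range m, minCount v c n := by simp
    _ ≤ ∑ i ∈ Finset.range m, windowCount v c (0 + i * n) n :=
        Finset.sum_le_sum fun i _ => minCount_le v c _ n
    _ = windowCount v c 0 (n * m) := by rw [← windowCount_mul, mul_comm]
    _ = ∑ j ∈ Finset.range n, windowCount v c (0 + j * m) m := windowCount_mul v c 0 n m
    _ ≤ ∑ _j ∈ Finset.range n, (minCount v c m + 1) :=
        Finset.sum_le_sum fun j _ => hbal.windowCount_le_minCount_add_one c _ m
    _ = n * (minCount v c m + 1) := by simp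

noncomputable def freq (v : ℕ → α) (c : α) : ℝ := ⨆ n : ℕ, (minCount v c n : ℝ) / n

theorem minCount_div_le_one (v : ℕ → α) (c : α) (n : ℕ) : (minCount v c n : ℝ) / n ≤ 1 :=
  div_le_one_of_le₀ (by exact_mod_cast (minCount_le v c 0 n).trans (windowCount_le v c 0 n))
    n.cast_nonneg

theorem freq_nonneg (v : ℕ → α) (c : α) : 0 ≤ freq v c :=
  Real.iSup_nonneg fun _ => by positivity

theorem freq_le_one (v : ℕ → α) (c : α) : freq v c ≤ 1 :=
  Real.iSup_le (minCount_div_le_one v c) zero_le_one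

theorem minCount_le_mul_freq (v : ℕ → α) (c : α) (n : ℕ) : (minCount v c n : ℝ) ≤ n * freq v c := by
  rcases n.eq_zero_or_pos with rfl | hn
  · simpa using (minCount_le v c 0 0).trans (windowCount_le v c 0 0)
  have hle := le_ciSup ⟨1, Set.forall_mem_range.mpr (minCount_div_le_one v c)⟩ n
  rwa [div_le_iff₀' (by positivity)] at hle

theorem Balanced.mul_freq_le (hbal : Balanced v) (c : α) (n : ℕ) :
    n * freq v c ≤ minCount v c n + 1 := by
  rcases n.eq_zero_or_pos with rfl | hn
  · simp only [Nat.cast_zero, zero_mul]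
    positivity
  have hn' : (0 : ℝ) < n := by exact_mod_cast hn
  rw [← le_div_iff₀' hn']
  refine ciSup_le fun m => ?_
  rcases m.eq_zero_or_pos with rfl | hm
  · simp only [Nat.cast_zero, div_zero]
    positivity
  rw [div_le_div_iff₀ (by exact_mod_cast hm) hn', mul_comm, mul_comm _ (m : ℝ)]
  exact_mod_cast hbal.mul_minCount_le c n m

noncomputable def discrepancy (v : ℕ → α) (c : α) (p : ℕ) : ℝ :=
  windowCount v c 0 p - p * freq v c

theorem discrepancy_add_sub (v : ℕ → α) (c : α) (p n : ℕ) :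
    discrepancy v c (p + n) - discrepancy v c p = windowCount v c p n - n * freq v c := by
  simp only [discrepancy, windowCount_add v c 0 p n, zero_add]
  push_cast
  ring

theorem Balanced.abs_discrepancy_sub_le (hbal : Balanced v) (c : α) (p q : ℕ) :
    |discrepancy v c q - discrepancy v c p| ≤ 1 := by
  wlog hpq : p ≤ q generalizing p q
  · rw [abs_sub_comm]
    exact this q p (by omega)
  obtain ⟨n, rfl⟩ := Nat.exists_eq_add_of_le hpq
  have hmin : (minCount v c n : ℝ) ≤ windowCount v c p n := by
    exact_mod_cast minCount_le v c p n
  have hmax : (windowCount v c p n : ℝ) ≤ minCount v c n + 1 := by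
    exact_mod_cast hbal.windowCount_le_minCount_add_one c p n
  rw [discrepancy_add_sub, abs_le]
  constructor <;> linarith [minCount_le_mul_freq v c n, hbal.mul_freq_le c n]

theorem eventuallyPeriodic_of_windowCount_eq (v : ℕ → α) (c : α) {L N : ℕ} (hL : 0 < L)
    (h : ∀ p, N ≤ p → windowCount v c p L = windowCount v c (p + 1) L) :
    EventuallyPeriodic fun n => v n = c := by
  refine ⟨L, hL, N, fun p hp => propext ?_⟩
  have hsplit := windowCount_add v c p 1 L
  rw [add_comm 1 L, windowCount_add, ← h p hp, windowCount_one, windowCount_one] at hsplit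
  split_ifs at hsplit <;> simp_all

theorem Balanced.irrational_freq (hbal : Balanced v) {c : α}
    (hc : ¬ EventuallyPeriodic fun n => v n = c) : Irrational (freq v c) := by
  rintro ⟨r, hr⟩
  set g : ℕ → ℤ := fun p => windowCount v c p r.den - r.num
  have hjump (p : ℕ) : discrepancy v c (p + r.den) - discrepancy v c p = g p := by
    rw [discrepancy_add_sub, ← hr, Rat.cast_def, mul_div_cancel₀ _ (by positivity)]
    push_cast [g]
    ring
  have hsign : (∀ p, 0 ≤ g p) ∨ ∀ p, g p ≤ 0 := by
    by_contra! h
    obtain ⟨⟨p, hp⟩, ⟨p', hp'⟩⟩ := h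
    have := hbal.windowCount_le_add_one c p' p r.den
    simp only [g] at hp hp'
    omega
  have hosc := hbal.abs_discrepancy_sub_le c
  have hzero : ∀ᶠ p in atTop, g p = 0 := by
    rcases hsign with hpos | hneg
    · exact eventually_eq_zero_of_abs_sub_le_one (fun x y => hosc y x) r.den_pos hjump hpos
    · have := eventually_eq_zero_of_abs_sub_le_one (f := fun p => -discrepancy v c p)
        (fun x y => by simpa only [neg_sub_neg] using hosc x y) r.den_pos
        (fun p => by push_cast; linarith [hjump p]) (fun p => neg_nonneg.mpr (hneg p))
      simpa using this
  obtain ⟨N, hN⟩ := eventually_atTop.mp hzero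
  refine hc (eventuallyPeriodic_of_windowCount_eq v c r.den_pos (N := N) fun p hp => ?_)
  have h₁ := hN p hp
  have h₂ := hN (p + 1) (by omega)
  simp only [g] at h₁ h₂
  omega

theorem Balanced.exists_apply_add_mul_eq_of_irrational_freq (hbal : Balanced v) {c : α}
    (hc : Irrational (freq v c)) (r : ℕ) {k : ℕ} (hk : 0 < k) : ∃ m, v (r + m * k) = c := by
  set ρ := freq v c
  have hρ : 0 < ρ := (freq_nonneg v c).lt_of_ne hc.ne_zero.symm
  have hosc := hbal.abs_discrepancy_sub_le c
  set β := ⨅ p, discrepancy v c p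
  have hβ_le (p : ℕ) : β ≤ discrepancy v c p :=
    ciInf_le ⟨discrepancy v c 0 - 1, by
      rintro _ ⟨p, rfl⟩; linarith [(abs_le.mp (hosc 0 p)).1]⟩ p
  have hle_β (p : ℕ) : discrepancy v c p - 1 ≤ β :=
    le_ciInf fun q => by linarith [(abs_le.mp (hosc q p)).2]
  -- the discrepancy drops by ρ at each position not carrying `c`, so cannot do so near its infimum
  have hocc (p : ℕ) (hp : discrepancy v c p < β + ρ) : v p = c := by
    by_contra h
    have hstep := discrepancy_add_sub v c p 1
    rw [windowCount_one, if_neg h] at hstep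
    push_cast at hstep
    linarith [hβ_le (p + 1)]
  obtain ⟨m, N, hm₁, hm₂⟩ := exists_nat_int_add_mul_mem_Ioo
    (hc.natCast_mul hk.ne').neg (-(r * ρ) - β) 0 hρ
  refine ⟨m, hocc _ ?_⟩
  -- `discrepancy - β` and the point found in `(0, ρ)` differ by an integer and both lie in `[0, 1]`
  set z : ℤ := windowCount v c 0 (r + m * k) - N
  have hz : discrepancy v c (r + m * k) - β = -(r * ρ) - β + m * -(k * ρ) + N + z := by
    simp only [discrepancy, z]
    push_cast
    ring
  have hz₀ : z = 0 := by
    have h₁ : (z : ℝ) < 1 := by linarith [hle_β (r + m * k)]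
    have h₂ : (-1 : ℝ) < z := by linarith [hβ_le (r + m * k), freq_le_one v c]
    have h₁' : z < 1 := by exact_mod_cast h₁
    have h₂' : -1 < z := by exact_mod_cast h₂
    omega
  rw [hz₀, Int.cast_zero, add_zero] at hz
  linarith

theorem Balanced.eventuallyPeriodic_of_apply_add_mul_eq [Finite α] (hbal : Balanced v) {a : α}
    {r k : ℕ} (hk : 0 < k) (ha : ∀ m, v (r + m * k) = a) : EventuallyPeriodic v :=
  eventuallyPeriodic_of_forall_ne a fun c hca => by
    by_contra hc
    obtain ⟨m, hm⟩ := hbal.exists_apply_add_mul_eq_of_irrational_freq (hbal.irrational_freq hc) r hk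
    exact hca (hm.symm.trans (ha m))

end Balanced

theorem statement0 {α : Type*} [Fintype α] [DecidableEq α] (v : ℕ → α)
    (hrec : Recurrent v) (hap : ¬ EventuallyPeriodic v) (hbal : Balanced v)
    (a : α) (ha : ∃ i, v i = a) :
    ∃ k : ℕ, 0 < k ∧
      {m : ℕ | ∃ i j : ℕ, ConsecOcc v a i j ∧ m = j - i} = {k, k + 1} := by
  set G := {m : ℕ | ∃ i j : ℕ, ConsecOcc v a i j ∧ m = j - i}
  obtain ⟨i₀, hi₀⟩ := ha
  have hne : G.Nonempty :=
    let ⟨j, hj⟩ := hrec.exists_consecOcc hi₀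
    ⟨_, i₀, j, hj, rfl⟩
  obtain ⟨i, j, hij, hk⟩ : sInf G ∈ G := Nat.sInf_mem hne
  have hG : ∀ m ∈ G, m = sInf G ∨ m = sInf G + 1 := by
    intro m hm
    have := Nat.sInf_le hm
    obtain ⟨i', j', hij', rfl⟩ := hm
    have := hbal.sub_le_sub_add_one_of_consecOcc hij' hij
    omega
  have hpos : 0 < sInf G := by have := hij.1; omega
  have hsucc : sInf G + 1 ∈ G := by
    by_contra hnot
    refine hap (hbal.eventuallyPeriodic_of_apply_add_mul_eq hpos
      (hrec.apply_add_mul_eq_of_consecOcc_sub_eq hi₀ fun i j h => ?_))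
    exact (hG _ ⟨i, j, h, rfl⟩).resolve_right fun h' => hnot (h' ▸ ⟨i, j, h, rfl⟩)
  refine ⟨sInf G, hpos, Set.Subset.antisymm hG ?_⟩
  exact Set.insert_subset_iff.mpr ⟨Nat.sInf_mem hne, Set.singleton_subset_iff.mpr hsucc⟩

end BalancedCE
end

section
/- Let d ≥ 5 and let 𝐯 be a sequence over an alphabet of d letters with critical exponent E(𝐯) < (d−1)/(d−2). Then 𝐯 is a Pansiot sequence, i.e.: (i) in each factor of 𝐯 of length d−1 all letters are pairwise distinct, and (ii) whenever i < j are consecutive occurrences of the same letter in 𝐯, the letters v_{i+1} and v_{j+1} are distinct. -/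
open Filter
open scoped ENNReal

namespace BalancedCE

variable {α : Type*} {β : Type*}

/-!
A factor of length `n` with period `p` has exponent at least `n / p`, so the bound on the critical
exponent forces `n (d - 2) < p (d - 1)` for every such factor. For two occurrences of a word of
length `r` at distance `p` this reads `r (d - 2) < p`. With `r = 1`, equal letters are more than
`d - 2` apart, which is condition (i). Between consecutive occurrences `i < j` of a letter `a`,
every window of `d` letters avoids `a`; by pigeonhole it repeats a letter, necessarily its first
and last, so the gap word has period `d - 1`, which for `d ≥ 5` bounds `j - i ≤ 2d - 4`. With
`r = 2`, a repetition `v (i + 1) = v (j + 1)` would instead need `j - i > 2d - 4`.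
-/

lemma factorAt_length (v : ℕ → α) (i n : ℕ) : (factorAt v i n).length = n := by
  simp [factorAt]

lemma factorAt_getElem? (v : ℕ → α) (i : ℕ) {n k : ℕ} (h : k < n) :
    (factorAt v i n)[k]? = some (v (i + k)) := by
  simp [factorAt, h]

lemma isPeriod_factorAt {v : ℕ → α} {i n p : ℕ} (hp : 0 < p)
    (h : ∀ t, t + p < n → v (i + t) = v (i + t + p)) : IsPeriod (factorAt v i n) p := by
  refine ⟨hp, fun t ht => ?_⟩
  rw [factorAt_length] at ht
  rw [factorAt_getElem? v i (by omega), factorAt_getElem? v i ht, ← add_assoc, h t ht]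

lemma length_div_lt_of_criticalExponent_lt {v : ℕ → α} {r : ℝ≥0∞} (hE : criticalExponent v < r)
    {z : List α} (hz : IsFactor v z) (hne : z ≠ []) {q : ℕ} (hq : IsPeriod z q) :
    (z.length : ℝ≥0∞) / q < r :=
  calc (z.length : ℝ≥0∞) / q ≤ expE z :=
        ENNReal.div_le_div_left (by exact_mod_cast Nat.sInf_le hq) _
    _ ≤ criticalExponent v :=
        le_iSup₂ (f := fun z (_ : IsFactor v z ∧ z ≠ []) => expE z) z ⟨hz, hne⟩
    _ < r := hE

lemma mul_lt_mul_of_periodic_factor {v : ℕ → α} {a b : ℕ} (hb : b ≠ 0)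
    (hE : criticalExponent v < (a : ℝ≥0∞) / b) {i n p : ℕ} (hn : n ≠ 0) (hp : 0 < p)
    (h : ∀ t, t + p < n → v (i + t) = v (i + t + p)) : n * b < p * a := by
  have hlt := length_div_lt_of_criticalExponent_lt hE ⟨i, by rw [factorAt_length]⟩
    (List.ne_nil_of_length_pos (by rw [factorAt_length]; omega)) (isPeriod_factorAt hp h)
  rw [factorAt_length, ENNReal.div_lt_iff (.inl (by exact_mod_cast hp.ne')) (.inl (by simp)),
    div_eq_mul_inv, mul_right_comm, ← div_eq_mul_inv,
    ENNReal.lt_div_iff_mul_lt (.inl (by exact_mod_cast hb)) (.inl (by simp))] at hlt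
  rw [mul_comm p]
  exact_mod_cast hlt

section Pansiot

variable {d : ℕ} {v : ℕ → α}

lemma mul_lt_sub_of_factor_repeats (hd : 3 ≤ d)
    (hE : criticalExponent v < ((d - 1 : ℕ) : ℝ≥0∞) / ((d - 2 : ℕ) : ℝ≥0∞))
    {i j r : ℕ} (hij : i < j) (h : ∀ t < r, v (i + t) = v (j + t)) : r * (d - 2) < j - i := by
  have hlt := mul_lt_mul_of_periodic_factor (i := i) (n := j - i + r) (p := j - i)
    (by omega) hE (by omega) (by omega) fun t ht => by
      rw [h t (by omega)]
      congr 1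
      omega
  rw [show d - 1 = d - 2 + 1 by omega, Nat.add_mul, Nat.mul_add, mul_one] at hlt
  exact Nat.lt_of_add_lt_add_left hlt

lemma ne_of_sub_le (hd : 3 ≤ d)
    (hE : criticalExponent v < ((d - 1 : ℕ) : ℝ≥0∞) / ((d - 2 : ℕ) : ℝ≥0∞))
    {k m : ℕ} (hkm : k < m) (hmk : m - k ≤ d - 2) : v k ≠ v m := fun heq => by
  have := mul_lt_sub_of_factor_repeats hd hE (r := 1) hkm fun t ht => by
    obtain rfl : t = 0 := by omega
    exact heq
  omega

lemma factorAt_nodup (hd : 3 ≤ d)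
    (hE : criticalExponent v < ((d - 1 : ℕ) : ℝ≥0∞) / ((d - 2 : ℕ) : ℝ≥0∞)) (i : ℕ) :
    (factorAt v i (d - 1)).Nodup := by
  refine List.Nodup.map_on (fun x hx y hy hxy => ?_) List.nodup_range
  rw [List.mem_range] at hx hy
  rcases lt_trichotomy x y with hlt | heq | hgt
  · exact absurd hxy (ne_of_sub_le hd hE (by omega) (by omega))
  · exact heq
  · exact absurd hxy.symm (ne_of_sub_le hd hE (by omega) (by omega))

lemma eq_add_of_window_avoids [Fintype α] (hcard : Fintype.card α = d)
    (hsep : ∀ k m, k < m → m - k ≤ d - 2 → v k ≠ v m) {a : α} {k : ℕ}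
    (havoid : ∀ t < d, v (k + t) ≠ a) : v k = v (k + (d - 1)) := by
  classical
  have hd : 0 < d := hcard ▸ Fintype.card_pos_iff.mpr ⟨a⟩
  obtain ⟨s, s', hss', hvs⟩ := Fintype.exists_ne_map_eq_of_card_lt
    (fun t : Fin d => (⟨v (k + t), havoid t t.isLt⟩ : {x // x ≠ a}))
    (by rw [Fintype.card_subtype_compl, Fintype.card_subtype_eq, hcard, Fintype.card_fin]; omega)
  rw [Subtype.mk_eq_mk] at hvs
  have ends : ∀ s s' : Fin d, s < s' → v (k + s) = v (k + s') → v k = v (k + (d - 1)) := by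
    intro s s' hlt hveq
    have hfar : d - 1 ≤ (s' : ℕ) - s := by
      by_contra hnear
      exact hsep _ _ (by omega) (by omega) hveq
    obtain ⟨hs, hs'⟩ : (s : ℕ) = 0 ∧ (s' : ℕ) = d - 1 := by omega
    rwa [hs, hs', add_zero] at hveq
  rcases Fin.lt_or_lt_of_ne hss' with hlt | hlt
  · exact ends s s' hlt hvs
  · exact ends s' s hlt hvs.symm

lemma sub_le_of_consecOcc [Fintype α] (hd : 5 ≤ d) (hcard : Fintype.card α = d)
    (hE : criticalExponent v < ((d - 1 : ℕ) : ℝ≥0∞) / ((d - 2 : ℕ) : ℝ≥0∞))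
    {a : α} {i j : ℕ} (hc : ConsecOcc v a i j) : j - i ≤ 2 * d - 4 := by
  obtain ⟨hij, -, -, hbetween⟩ := hc
  by_contra! hgap
  have hlt := mul_lt_mul_of_periodic_factor (i := i + 1) (n := j - i - 1) (p := d - 1)
    (by omega) hE (by omega) (by omega) fun t ht =>
      eq_add_of_window_avoids hcard (fun _ _ => ne_of_sub_le (by omega) hE)
        fun s hs => hbetween _ (by omega) (by omega)
  obtain ⟨e, rfl⟩ : ∃ e, d = e + 5 := ⟨d - 5, by omega⟩
  obtain ⟨g, hg⟩ : ∃ g, j - i - 1 = g + 2 * e + 6 := ⟨j - i - 1 - (2 * e + 6), by omega⟩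
  rw [hg, show e + 5 - 2 = e + 3 by omega, show e + 5 - 1 = e + 4 by omega] at hlt
  -- `(2d - 4)(d - 2) ≥ (d - 1)²` once `d ≥ 5`
  nlinarith

end Pansiot

theorem statement1 {α : Type*} [Fintype α] (d : ℕ) (hd : 5 ≤ d)
    (hcard : Fintype.card α = d) (v : ℕ → α)
    (hE : criticalExponent v < ((d - 1 : ℕ) : ℝ≥0∞) / ((d - 2 : ℕ) : ℝ≥0∞)) :
    Pansiot d v := by
  refine ⟨factorAt_nodup (by omega) hE, fun a i j hc hnext => ?_⟩
  have hgap := sub_le_of_consecOcc hd hcard hE hc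
  have hfar := mul_lt_sub_of_factor_repeats (r := 2) (by omega) hE hc.1 fun t ht => by
    rcases (by omega : t = 0 ∨ t = 1) with rfl | rfl
    · exact hc.2.1.trans hc.2.2.1.symm
    · exact hnext
  omega

end BalancedCE
end

section
/- Let d ≥ 5 and let 𝐯 be a Pansiot sequence over an alphabet of d letters. Then the distance j − i between any two consecutive occurrences i < j of the same letter in 𝐯 equals d−1, d, or d+1. Moreover, every factor of 𝐯 of length d+1 contains d distinct letters. -/
open Filter
open scoped ENNReal

namespace BalancedCE

variable {α : Type*} {β : Type*}

section Aux

variable {α : Type*} [Fintype α] [DecidableEq α]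

lemma pansiot_ne {d : ℕ} {v : ℕ → α} (h : ∀ i, (factorAt v i (d-1)).Nodup)
    (i : ℕ) {s t : ℕ} (hs : s < d - 1) (ht : t < d - 1) (hst : s ≠ t) :
    v (i + s) ≠ v (i + t) := by
  intro he
  have h1 : (factorAt v i (d-1))[s]'(by simpa [factorAt] using hs) =
            (factorAt v i (d-1))[t]'(by simpa [factorAt] using ht) := by
    simpa [factorAt] using he
  exact hst ((h i).getElem_inj_iff.mp h1)

lemma window_complete {d : ℕ} (hd1 : 1 ≤ d) (hcard : Fintype.card α = d)
    {v : ℕ → α} {i : ℕ} (hnd : (factorAt v i (d-1)).Nodup) {a : α}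
    (ha : ∀ s, s < d - 1 → v (i + s) ≠ a) {c : α} (hc : c ≠ a) :
    ∃ s, s < d - 1 ∧ v (i + s) = c := by
  by_contra hno
  push_neg at hno
  set S := (factorAt v i (d-1)).toFinset with hS
  have hScard : S.card = d - 1 := by
    rw [hS, List.toFinset_card_of_nodup hnd]; simp [factorAt]
  have haS : a ∉ S := by
    simp only [hS, List.mem_toFinset, factorAt, List.mem_map, List.mem_range]
    rintro ⟨s, hs, hv⟩; exact ha s hs hv
  have hcS : c ∉ S := by
    simp only [hS, List.mem_toFinset, factorAt, List.mem_map, List.mem_range]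
    rintro ⟨s, hs, hv⟩; exact hno s hs hv
  have hle : (insert a (insert c S)).card ≤ d := by
    rw [← hcard]; exact Finset.card_le_univ _
  rw [Finset.card_insert_of_notMem (by
        simp only [Finset.mem_insert, not_or]
        exact ⟨fun h => hc h.symm, haS⟩),
      Finset.card_insert_of_notMem hcS, hScard] at hle
  omega

/-- If `v i = a` and `a` does not occur at positions `i+1, …, i+d+1`, contradiction. -/
lemma key_gap {d : ℕ} (hd : 5 ≤ d) (hcard : Fintype.card α = d) {v : ℕ → α}
    (hpan : Pansiot d v) {a : α} {i : ℕ} (hi : v i = a)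
    (hgap : ∀ k, i < k → k ≤ i + d + 1 → v k ≠ a) : False := by
  obtain ⟨hnd, hcons⟩ := hpan
  have ha1 : ∀ s, s < d - 1 → v (i + 1 + s) ≠ a := fun s hs =>
    hgap (i + 1 + s) (by omega) (by omega)
  -- v (i + d) = v (i + 1)
  obtain ⟨s, hs, hvs⟩ := window_complete (by omega) hcard (hnd (i+1)) ha1
    (hgap (i + d) (by omega) (by omega))
  have hB : v (i + d) = v (i + 1) := by
    rcases Nat.eq_zero_or_pos s with h0 | h1
    · rw [← hvs, h0]
    · exfalso
      have := pansiot_ne hnd (i + 2) (s := s - 1) (t := d - 2)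
        (by omega) (by omega) (by omega)
      apply this
      have e1 : i + 2 + (s - 1) = i + 1 + s := by omega
      have e2 : i + 2 + (d - 2) = i + d := by omega
      rw [e1, e2, hvs]
  -- v (i + d + 1) = v (i + 2)
  obtain ⟨t, ht, hvt⟩ := window_complete (by omega) hcard (hnd (i+1)) ha1
    (hgap (i + d + 1) (by omega) (by omega))
  have hC : v (i + d + 1) = v (i + 2) := by
    rcases Nat.lt_or_ge t 2 with h2 | h2
    · interval_cases t
      · exfalso
        have := pansiot_ne hnd (i + d) (s := 0) (t := 1) (by omega) (by omega) (by omega)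
        apply this
        have e1 : i + d + 0 = i + d := by omega
        have e2 : i + d + 1 + 0 = i + d + 1 := by omega
        rw [e1, hB]
        simpa using hvt
      · have e : i + 1 + 1 = i + 2 := by omega
        rw [e] at hvt
        exact hvt.symm
    · exfalso
      have := pansiot_ne hnd (i + 3) (s := t - 2) (t := d - 2)
        (by omega) (by omega) (by omega)
      apply this
      have e1 : i + 3 + (t - 2) = i + 1 + t := by omega
      have e2 : i + 3 + (d - 2) = i + d + 1 := by omega
      rw [e1, e2, hvt]
  -- i+1 and i+d are consecutive occurrences of v (i+1)
  have hocc : ConsecOcc v (v (i + 1)) (i + 1) (i + d) := by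
    refine ⟨by omega, rfl, hB, fun k hk1 hk2 => ?_⟩
    have := pansiot_ne hnd (i + 1) (s := k - (i + 1)) (t := 0)
      (by omega) (by omega) (by omega)
    have e1 : i + 1 + (k - (i + 1)) = k := by omega
    rw [e1] at this
    simpa using this
  have := hcons (v (i + 1)) (i + 1) (i + d) hocc
  apply this
  have e1 : i + 1 + 1 = i + 2 := by omega
  have e2 : i + d + 1 = i + d + 1 := rfl
  rw [e1, ← hC]

/-- If `a` does not occur at positions `i, …, i+d`, contradiction. -/
lemma key_window {d : ℕ} (hd : 5 ≤ d) (hcard : Fintype.card α = d) {v : ℕ → α}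
    (hpan : Pansiot d v) {a : α} {i : ℕ}
    (hgap : ∀ k, k ≤ d → v (i + k) ≠ a) : False := by
  obtain ⟨hnd, hcons⟩ := hpan
  have ha0 : ∀ s, s < d - 1 → v (i + s) ≠ a := fun s hs => hgap s (by omega)
  have ha1 : ∀ s, s < d - 1 → v (i + 1 + s) ≠ a := fun s hs => by
    have e : i + 1 + s = i + (s + 1) := by omega
    rw [e]; exact hgap (s + 1) (by omega)
  -- v (i + d - 1) = v i
  obtain ⟨s, hs, hvs⟩ := window_complete (by omega) hcard (hnd i) ha0
    (c := v (i + (d - 1))) (hgap (d - 1) (by omega))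
  have hB : v (i + (d - 1)) = v i := by
    rcases Nat.eq_zero_or_pos s with h0 | h1
    · rw [← hvs, h0]; simp
    · exfalso
      have := pansiot_ne hnd (i + 1) (s := s - 1) (t := d - 2)
        (by omega) (by omega) (by omega)
      apply this
      have e1 : i + 1 + (s - 1) = i + s := by omega
      have e2 : i + 1 + (d - 2) = i + (d - 1) := by omega
      rw [e1, e2, hvs]
  -- v (i + d) = v (i + 1)
  obtain ⟨t, ht, hvt⟩ := window_complete (by omega) hcard (hnd (i+1)) ha1
    (hgap d (by omega))
  have hC : v (i + d) = v (i + 1) := by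
    rcases Nat.eq_zero_or_pos t with h0 | h1
    · rw [← hvt, h0]
    · exfalso
      have := pansiot_ne hnd (i + 2) (s := t - 1) (t := d - 2)
        (by omega) (by omega) (by omega)
      apply this
      have e1 : i + 2 + (t - 1) = i + 1 + t := by omega
      have e2 : i + 2 + (d - 2) = i + d := by omega
      rw [e1, e2, hvt]
  -- i and i + (d - 1) are consecutive occurrences of v i
  have hocc : ConsecOcc v (v i) i (i + (d - 1)) := by
    refine ⟨by omega, rfl, hB, fun k hk1 hk2 => ?_⟩
    have := pansiot_ne hnd i (s := k - i) (t := 0)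
      (by omega) (by omega) (by omega)
    have e1 : i + (k - i) = k := by omega
    rw [e1] at this
    simpa using this
  have := hcons (v i) i (i + (d - 1)) hocc
  apply this
  have e2 : i + (d - 1) + 1 = i + d := by omega
  rw [e2, hC]

end Aux

theorem statement2 {α : Type*} [Fintype α] [DecidableEq α] (d : ℕ) (hd : 5 ≤ d)
    (hcard : Fintype.card α = d) (v : ℕ → α) (hpan : Pansiot d v) :
    (∀ (a : α) (i j : ℕ), ConsecOcc v a i j →
      j - i = d - 1 ∨ j - i = d ∨ j - i = d + 1) ∧
    (∀ i : ℕ, (factorAt v i (d + 1)).toFinset.card = d) := by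
  constructor
  · intro a i j hc
    obtain ⟨hij, hvi, hvj, hbet⟩ := hc
    have hlow : d - 1 ≤ j - i := by
      by_contra hlt
      push_neg at hlt
      have := pansiot_ne hpan.1 i (s := 0) (t := j - i)
        (by omega) (by omega) (by omega)
      apply this
      have e1 : i + 0 = i := rfl
      have e2 : i + (j - i) = j := by omega
      rw [e1, e2, hvi, hvj]
    have hhigh : j - i ≤ d + 1 := by
      by_contra hgt
      push_neg at hgt
      exact key_gap hd hcard ⟨hpan.1, hpan.2⟩ hvi
        (fun k hk1 hk2 => hbet k hk1 (by omega))
    omega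
  · intro i
    set S := (factorAt v i (d + 1)).toFinset with hS
    have hle : S.card ≤ d := by
      rw [← hcard]; exact Finset.card_le_univ _
    by_contra hne
    have hlt : S.card < d := lt_of_le_of_ne hle hne
    have : ∃ a : α, a ∉ S := by
      by_contra h'
      push_neg at h'
      have : (Finset.univ : Finset α) ⊆ S := fun a _ => h' a
      have := Finset.card_le_card this
      rw [Finset.card_univ, hcard] at this
      omega
    obtain ⟨a, ha⟩ := this
    refine key_window hd hcard hpan (a := a) (i := i) (fun k hk hv => ha ?_)
    simp only [hS, List.mem_toFinset, factorAt, List.mem_map, List.mem_range]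
    exact ⟨k, by omega, hv⟩

end BalancedCE
end

section
/- Let δ ≥ 1 be an integer, let 𝐮 be a Sturmian sequence over {a, b}, and let 𝐱 = colour(𝐮, (12⋯δ)^ω, (1′2′⋯δ′)^ω). Let w be a nonempty factor of 𝐱 such that its projection π(w) contains both letters a and b, and let v be a return word to w in 𝐱. Then both |π(v)|_a and |π(v)|_b are divisible by δ. -/
open Filter
open scoped ENNReal

namespace BalancedCE

variable {α : Type*} {β : Type*}

lemma countBefore_succ (u : ℕ → Bool) (c : Bool) (m : ℕ) :
    countBefore u c (m + 1) = countBefore u c m + (if u m = c then 1 else 0) := by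
  simp only [countBefore, List.range_succ, List.filter_append]
  by_cases h : u m = c <;> simp [h]

lemma factorAt_succ (v : ℕ → α) (i n : ℕ) :
    factorAt v i (n + 1) = factorAt v i n ++ [v (i + n)] := by
  simp [factorAt, List.range_succ]

lemma countBefore_add (u : ℕ → Bool) (c : Bool) (i n : ℕ) :
    countBefore u c (i + n) = countBefore u c i + (factorAt u i n).count c := by
  induction n with
  | zero => simp [factorAt, countBefore]
  | succ n ih =>
      rw [← Nat.add_assoc, countBefore_succ, ih, factorAt_succ, List.count_append]
      by_cases h : u (i + n) = c <;> simp [h, List.count_singleton', Nat.add_assoc]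

lemma proj_colourCyc (δ : ℕ) (u : ℕ → Bool) (n : ℕ) :
    proj (colourCyc δ u n) = u n := by
  cases hn : u n <;> simp [colourCyc, colour, proj, hn]

lemma map_proj_factorAt (δ : ℕ) (u : ℕ → Bool) (i n : ℕ) :
    (factorAt (colourCyc δ u) i n).map proj = factorAt u i n := by
  simp only [factorAt, List.map_map]
  exact List.map_congr_left fun k _ => proj_colourCyc δ u (i + k)

lemma occursAt_apply {z : ℕ → α} {w : List α} {i : ℕ} (h : OccursAt z w i)
    {k : ℕ} (hk : k < w.length) : z (i + k) = w[k] := by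
  have h1 : (factorAt z i w.length)[k]? = w[k]? := by rw [h]
  have h2 : (factorAt z i w.length)[k]? = some (z (i + k)) := by
    simp [factorAt, hk, List.getElem?_map, List.getElem?_range]
  rw [h2, List.getElem?_eq_getElem hk] at h1
  exact Option.some.inj h1

/-- Key congruence for one colour `c`. -/
lemma key_dvd (δ : ℕ) (u : ℕ → Bool) (w : List (ZMod δ ⊕ ZMod δ)) (i j : ℕ)
    (hij : i < j) (hoi : OccursAt (colourCyc δ u) w i) (hoj : OccursAt (colourCyc δ u) w j)
    (c : Bool) (hc : c ∈ w.map proj) :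
    δ ∣ (((factorAt (colourCyc δ u) i (j - i)).map proj).count c) := by
  -- pointwise `u` values at the two occurrences agree on the window of `w`
  have hu : ∀ m (hm : m < w.length),
      u (i + m) = proj (w[m]'hm) ∧ u (j + m) = proj (w[m]'hm) := by
    intro m hm
    constructor
    · rw [← proj_colourCyc δ u (i + m), occursAt_apply hoi hm]
    · rw [← proj_colourCyc δ u (j + m), occursAt_apply hoj hm]
  obtain ⟨k, hk, hck⟩ : ∃ k, ∃ h : k < w.length, proj (w[k]'h) = c := by
    obtain ⟨n, hn, hwn⟩ := List.mem_iff_getElem.mp hc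
    rw [List.length_map] at hn
    exact ⟨n, hn, by simpa using hwn⟩
  -- the coloured letters at positions i+k and j+k are equal
  have hic : u (i + k) = c := by rw [(hu k hk).1]; exact hck
  have hjc : u (j + k) = c := by rw [(hu k hk).2]; exact hck
  have heq : colourCyc δ u (i + k) = colourCyc δ u (j + k) := by
    rw [occursAt_apply hoi hk, occursAt_apply hoj hk]
  have hcast : (countBefore u c (i + k) : ZMod δ) = (countBefore u c (j + k) : ZMod δ) := by
    cases c with
    | false =>
        simp only [colourCyc, colour, hic, hjc, if_pos rfl] at heq
        exact Sum.inl.inj heq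
    | true =>
        simp only [colourCyc, colour, hic, hjc] at heq
        simpa [cyc] using Sum.inr.inj heq
  -- the prefixes of length k agree
  have hfa : factorAt u i k = factorAt u j k := by
    apply List.map_congr_left
    intro m hm
    have hm' : m < w.length := lt_of_lt_of_le (List.mem_range.mp hm) (le_of_lt hk)
    rw [(hu m hm').1, (hu m hm').2]
    
  have hik : countBefore u c (i + k) = countBefore u c i + (factorAt u i k).count c :=
    countBefore_add u c i k
  have hjk : countBefore u c (j + k) = countBefore u c j + (factorAt u i k).count c := by
    rw [hfa]; exact countBefore_add u c j k
  have hAB : (countBefore u c i : ZMod δ) = (countBefore u c j : ZMod δ) := by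
    have := hcast
    rw [hik, hjk] at this
    push_cast at this
    exact add_right_cancel this
  have hmod : countBefore u c i ≡ countBefore u c j [MOD δ] :=
    (ZMod.natCast_eq_natCast_iff _ _ _).mp hAB
  have hji : j = i + (j - i) := by omega
  have hle : countBefore u c i ≤ countBefore u c j := by
    rw [hji, countBefore_add]; exact Nat.le_add_right _ _
  have hdvd : δ ∣ countBefore u c j - countBefore u c i :=
    (Nat.modEq_iff_dvd' hle).mp hmod
  have hcount : ((factorAt (colourCyc δ u) i (j - i)).map proj).count c
      = countBefore u c j - countBefore u c i := by
    rw [map_proj_factorAt]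
    have h1 := countBefore_add u c i (j - i)
    have h2 : i + (j - i) = j := by omega
    rw [h2] at h1
    omega
  rw [hcount]
  exact hdvd

theorem statement11 (δ : ℕ) (hδ : 1 ≤ δ) (u : ℕ → Bool) (hu : Sturmian u)
    (w v : List (ZMod δ ⊕ ZMod δ))
    (hw : IsFactor (colourCyc δ u) w) (hwne : w ≠ [])
    (hπa : false ∈ w.map proj) (hπb : true ∈ w.map proj)
    (hv : IsReturnWord (colourCyc δ u) w v) :
    δ ∣ (v.map proj).count false ∧ δ ∣ (v.map proj).count true := by
  obtain ⟨i, j, hij, hoi, hoj, -, hvdef⟩ := hv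
  subst hvdef
  exact ⟨key_dvd δ u w i j hij hoi hoj false hπa, key_dvd δ u w i j hij hoi hoj true hπb⟩

end BalancedCE
end
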